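/- arXiv:1909.10822 — 9 statements merged into one kernel-verified Lean document; each statement's English description precedes it below -/
import Mathlib

section
/- Let f : A ⥤ B be an isofibration of categories (every isomorphism b ≅ f a in B lifts to an isomorphism in A with codomain a). If α : g ⟶ h is a natural transformation between functors g, h : X ⥤ A such that f applied to α (the whiskered transformation whiskerRight α f) is a natural isomorphism, then α factors as α = σ ∘ τ where σ is a natural isomorphism and τ is f-vertical (i.e. whiskerRight τ f is the identity transformation). -/
open CategoryTheory

universe v₁ v₂ v₃ u₁ u₂ u₃

/-- A functor `f` is an isofibration if every isomorphism `β : b ≅ f a` in `B` lifts to an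
isomorphism `σ : a' ≅ a` in `A` with `f a' = b` and `f σ = β` (modulo the identification). -/
def IsIsofibration {A : Type u₁} {B : Type u₂} [Category.{v₁} A] [Category.{v₂} B]
    (f : A ⥤ B) : Prop :=
  ∀ (a : A) (b : B) (β : b ≅ f.obj a),
    ∃ (a' : A) (σ : a' ≅ a) (h : f.obj a' = b),
      f.map σ.hom = eqToHom h ≫ β.hom

/-! Lift each component of the isomorphism `f α` to an isomorphism `σ x : m x ≅ h x` with
`f (m x) = f (g x)`. Transporting the action of `h` on morphisms along these isomorphisms makes
`m` a functor lying strictly over `g ⋙ f` and `σ` a natural isomorphism; then `τ := α ≫ σ⁻¹`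
is mapped by `f` to `f α ≫ (f α)⁻¹`, an identity. -/

section

variable {A : Type u₁} {B : Type u₂} {X : Type u₃}
    [Category.{v₁} A] [Category.{v₂} B] [Category.{v₃} X]

theorem CategoryTheory.Functor.map_inv_eq_of_map_hom_eq {f : A ⥤ B} {a a' : A} {b : B}
    {β : b ≅ f.obj a} {σ : a' ≅ a} {hb : f.obj a' = b} (hσ : f.map σ.hom = eqToHom hb ≫ β.hom) :
    f.map σ.inv = β.inv ≫ eqToHom hb.symm := by
  rw [← cancel_epi (f.map σ.hom), ← f.map_comp, hσ]
  simp

theorem IsIsofibration.exists_lift_natIso {f : A ⥤ B} (hf : IsIsofibration f) {k : X ⥤ B}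
    {h : X ⥤ A} (β : k ≅ h ⋙ f) :
    ∃ (m : X ⥤ A) (σ : m ≅ h) (w : m ⋙ f = k),
      Functor.whiskerRight σ.hom f = eqToHom w ≫ β.hom := by
  choose obj σ hobj hmap using fun x => hf (h.obj x) (k.obj x) (β.app x)
  have hinv x := Functor.map_inv_eq_of_map_hom_eq (hmap x)
  refine ⟨h.copyObj obj fun x => (σ x).symm, (h.isoCopyObj obj _).symm,
    CategoryTheory.Functor.ext hobj fun x y u => ?_, ?_⟩
  · simp only [Functor.copyObj, Iso.symm_inv, Iso.symm_hom, Functor.comp_obj, Functor.comp_map,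
      Functor.map_comp, hmap, Iso.app_hom, hinv, Iso.app_inv, Category.assoc]
    rw [← Functor.comp_map, ← β.hom.naturality_assoc]
    simp
  · ext x
    simp only [Functor.comp_obj, Iso.symm_hom, Functor.whiskerRight_app,
      Functor.isoCopyObj_inv_app, Iso.symm_inv, NatTrans.comp_app, eqToHom_app]
    exact hmap x

end

/-- If `f` is an isofibration and `α : g ⟶ h` is a natural transformation whose whiskering with
`f` is a natural isomorphism, then `α = τ ≫ σ` with `σ` a natural isomorphism and
`τ` `f`-vertical (its whiskering with `f` is an identity). -/
theorem stmt0 {A : Type u₁} {B : Type u₂} {X : Type u₃}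
    [Category.{v₁} A] [Category.{v₂} B] [Category.{v₃} X]
    (f : A ⥤ B) (hf : IsIsofibration f) (g h : X ⥤ A) (α : g ⟶ h)
    (hα : IsIso (Functor.whiskerRight α f)) :
    ∃ (m : X ⥤ A) (τ : g ⟶ m) (σ : m ⟶ h),
      α = τ ≫ σ ∧ IsIso σ ∧
        ∃ (w : g ⋙ f = m ⋙ f), Functor.whiskerRight τ f = eqToHom w := by
  obtain ⟨m, σ, w, hσ⟩ := hf.exists_lift_natIso (asIso (Functor.whiskerRight α f))
  refine ⟨m, α ≫ σ.inv, σ.hom, by simp, inferInstance, w.symm, ?_⟩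
  rw [← cancel_mono (Functor.whiskerRight σ.hom f), ← Functor.whiskerRight_comp, hσ]
  simp
end

section
/- Let f : A ⥤ B be an isofibration of categories. Then f is conservative (reflects isomorphisms) if and only if every fibre of f is a groupoid, i.e. every morphism u in A with f u an identity morphism is invertible. -/
open CategoryTheory

universe v₁ v₂ u₁ u₂

/-- For an isofibration `f`, `f` is conservative iff every fibre of `f` is a groupoid,
i.e. every morphism sent by `f` to an identity is invertible. -/
theorem stmt1 {A : Type u₁} {B : Type u₂} [Category.{v₁} A] [Category.{v₂} B]
    (f : A ⥤ B) (hf : IsIsofibration f) :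
    (∀ {a a' : A} (u : a ⟶ a'), IsIso (f.map u) → IsIso u) ↔
      (∀ {a a' : A} (u : a ⟶ a') (h : f.obj a = f.obj a'),
        f.map u = eqToHom h → IsIso u) := by
  constructor
  · intro hcons a a' u h hu
    exact hcons u (by rw [hu]; infer_instance)
  · intro hfib a a' u hu
    obtain ⟨a'', σ, h, hσ⟩ := hf a' (f.obj a) (asIso (f.map u))
    have hv : f.map (u ≫ σ.inv) = eqToHom h.symm := by
      have h2 : f.map σ.inv = (f.mapIso σ).inv := rfl
      rw [Functor.map_comp, h2, Iso.comp_inv_eq]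
      have h3 : (f.mapIso σ).hom = f.map σ.hom := rfl
      rw [h3, hσ]
      simp
    have hviso : IsIso (u ≫ σ.inv) := hfib (u ≫ σ.inv) h.symm hv
    have : u = (u ≫ σ.inv) ≫ σ.hom := by simp
    rw [this]
    infer_instance
end

section
/- (Chevalley criterion, Cat version, 'if' direction) Let f : A ⥤ B be a functor and let f₁ : (A ↓ A) ⥤ (B ↓ f) be the functor sending a morphism α : a₀ ⟶ a₁ of A to the object (f a₀, a₁, f α) of the comma category B ↓ f. If f₁ admits a right adjoint with counit an identity (i.e. f₁ has a strict right adjoint section), then f is a Grothendieck fibration. -/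
open CategoryTheory

universe v₁ v₂ u₁ u₂

variable {A : Type u₁} {B : Type u₂} [Category.{v₁} A] [Category.{v₂} B]

/-- `α : a' ⟶ a` is `f`-cartesian. -/
def IsCartesian (f : A ⥤ B) {a' a : A} (α : a' ⟶ a) : Prop :=
  ∀ {y : A} (τ' : y ⟶ a) (g : f.obj y ⟶ f.obj a'),
    f.map τ' = g ≫ f.map α →
      ∃! τ : y ⟶ a', f.map τ = g ∧ τ ≫ α = τ'

/-- `f` is a Grothendieck fibration. -/
def IsGrothendieckFibration (f : A ⥤ B) : Prop :=
  ∀ (a : A) (b : B) (β : b ⟶ f.obj a),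
    ∃ (a' : A) (α : a' ⟶ a) (h : f.obj a' = b),
      f.map α = eqToHom h ≫ β ∧ IsCartesian f α

/-- The canonical functor `f₁ : (A ↓ A) ⥤ (B ↓ f)` sending `α : a₀ ⟶ a₁` to
`(f a₀, a₁, f α)`. -/
def fOne (f : A ⥤ B) : Arrow A ⥤ Comma (𝟭 B) f where
  obj α := { left := f.obj α.left, right := α.right, hom := f.map α.hom }
  map {X Y} u :=
    { left := f.map u.left
      right := u.right
      w := by
        dsimp
        rw [← f.map_comp, ← f.map_comp, Arrow.w] }

/-!
With an identity counit, transposing `u : f₁ z ⟶ X` along the adjunction just means writing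
`u = f₁ v` for a unique `v : z ⟶ r X`, so `f₁` is bijective on morphisms into the arrow `r X`.
For `X = (b, a, β)` the arrow `r X` lies over `β`, and bijectivity on morphisms of the shape
`(g, 𝟙 a)` is exactly the unique factorisation that makes it cartesian.
-/

lemma CategoryTheory.Adjunction.map_bijective_of_counit_eq_eqToHom {C D : Type*}
    [Category C] [Category D] {L : C ⥤ D} {R : D ⥤ C} (adj : L ⊣ R) {w : R ⋙ L = 𝟭 D}
    (hc : adj.counit = eqToHom w) (Z : C) (Y : D) :
    Function.Bijective (L.map : (Z ⟶ R.obj Y) → (L.obj Z ⟶ L.obj (R.obj Y))) := by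
  have hY : L.obj (R.obj Y) = Y := Functor.congr_obj w Y
  convert ((adj.homEquiv Z Y).symm.trans ((Iso.refl _).homCongr (eqToIso hY.symm))).bijective
    using 1
  funext v
  simp [Adjunction.homEquiv_counit, hc, eqToHom_app]

lemma isCartesian_of_fOne_map_bijective (f : A ⥤ B) {a' a : A} (α : a' ⟶ a)
    (hα : ∀ Z : Arrow A, Function.Bijective
      ((fOne f).map : (Z ⟶ Arrow.mk α) → ((fOne f).obj Z ⟶ (fOne f).obj (Arrow.mk α)))) :
    IsCartesian f α := by
  intro y τ' g hg
  let u : (fOne f).obj (Arrow.mk τ') ⟶ (fOne f).obj (Arrow.mk α) :=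
    { left := g, right := 𝟙 a, w := by simp [fOne, hg] }
  obtain ⟨v, hv⟩ := (hα (Arrow.mk τ')).2 u
  have hv_left : f.map v.left = g := congrArg CommaMorphism.left hv
  have hv_right : v.right = 𝟙 a := congrArg CommaMorphism.right hv
  refine ⟨v.left, ⟨hv_left, by simp [hv_right]⟩, ?_⟩
  rintro τ ⟨hτ_map, hτ_comp⟩
  let v' : Arrow.mk τ' ⟶ Arrow.mk α := Arrow.homMk τ (𝟙 a) (by simpa using hτ_comp)
  have : v' = v := (hα (Arrow.mk τ')).1 (by rw [hv]; ext <;> simp [v', u, fOne, hτ_map])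
  exact congrArg CommaMorphism.left this

/-- (Chevalley criterion, `if` direction) If `f₁ : (A ↓ A) ⥤ (B ↓ f)` admits a right adjoint
with identity counit, then `f` is a Grothendieck fibration. -/
theorem stmt7 (f : A ⥤ B)
    (h : ∃ (r : Comma (𝟭 B) f ⥤ Arrow A) (adj : fOne f ⊣ r)
      (w : r ⋙ fOne f = 𝟭 (Comma (𝟭 B) f)), adj.counit = eqToHom w) :
    IsGrothendieckFibration f := by
  obtain ⟨r, adj, w, hc⟩ := h
  intro a b β
  let X : Comma (𝟭 B) f := ⟨b, a, β⟩
  have hX : (fOne f).obj (r.obj X) = X := Functor.congr_obj w X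
  have hbij := fun Z ↦ adj.map_bijective_of_counit_eq_eqToHom hc Z X
  generalize r.obj X = Y at hX hbij
  obtain ⟨a', a'', α⟩ := Y
  obtain ⟨rfl, rfl, hα⟩ := (Comma.mk.injEq _ _ _ _ _ _).mp hX
  cases eq_of_heq hα
  exact ⟨a', α, rfl, by simp, isCartesian_of_fOne_map_bijective f α hbij⟩
end

section
/- (Chevalley criterion, Cat version, 'only if' direction) Let f : A ⥤ B be a Grothendieck fibration (with a chosen cleavage). Then the canonical functor f₁ : (A ↓ A) ⥤ (B ↓ f), sending α : a₀ ⟶ a₁ to (f a₀, a₁, f α), admits a right adjoint whose counit is an identity natural transformation. -/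
open CategoryTheory

universe v₁ v₂ u₁ u₂

variable {A : Type u₁} {B : Type u₂} [Category.{v₁} A] [Category.{v₂} B]

/-!
A cleavage picks, for every object `X = (b, a, β)` of `B ↓ f`, a cartesian arrow `α` with
`f₁ α = X` on the nose. Cartesianness of `α` says precisely that `f₁` is bijective on morphisms
with target `α`, i.e. `g ↦ f₁ g` identifies `γ ⟶ α` with `f₁ γ ⟶ X`. Strict preimages with
this property always assemble into a right adjoint that is a section of the functor, and its
counit is `eqToHom`, being the image of `𝟙` under these bijections.
-/

section StrictSectionRightAdjoint

variable {C : Type*} {D : Type*} [Category C] [Category D]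

theorem exists_rightAdjoint_counit_eq_eqToHom_of_bijective_map (L : C ⥤ D) (R₀ : D → C)
    (hR₀ : ∀ d, L.obj (R₀ d) = d)
    (hL : ∀ c d, Function.Bijective (L.map : (c ⟶ R₀ d) → (L.obj c ⟶ L.obj (R₀ d)))) :
    ∃ (R : D ⥤ C) (adj : L ⊣ R) (w : R ⋙ L = 𝟭 D), adj.counit = eqToHom w := by
  let e : ∀ c d, (L.obj c ⟶ d) ≃ (c ⟶ R₀ d) := fun c d =>
    ((Equiv.ofBijective _ (hL c d)).trans (eqToIso (hR₀ d)).homToEquiv).symm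
  have e_symm_apply : ∀ c d (g : c ⟶ R₀ d), (e c d).symm g = L.map g ≫ eqToHom (hR₀ d) :=
    fun _ _ _ => rfl
  have he : ∀ c' c d (g : c' ⟶ c) (h : L.obj c ⟶ d), e c' d (L.map g ≫ h) = g ≫ e c d h := by
    intro c' c d g h
    rw [← Equiv.eq_symm_apply, e_symm_apply, L.map_comp, Category.assoc, ← e_symm_apply,
      Equiv.symm_apply_apply]
  let adj := Adjunction.adjunctionOfEquivRight e he
  have counit_app : ∀ d, adj.counit.app d = eqToHom (hR₀ d) := by
    intro d
    simp [adj, e_symm_apply]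
  have w : Adjunction.rightAdjointOfEquiv e he ⋙ L = 𝟭 D := by
    refine CategoryTheory.Functor.ext hR₀ fun d d' g => ?_
    have := adj.counit.naturality g
    rw [counit_app, counit_app] at this
    simp [← reassoc_of% this]
  exact ⟨_, adj, w, by ext d; simp [counit_app, eqToHom_app]⟩

end StrictSectionRightAdjoint

section Fibration

variable {f : A ⥤ B}

theorem IsCartesian.hom_ext {a' a y : A} {α : a' ⟶ a} (hα : IsCartesian f α) {τ₁ τ₂ : y ⟶ a'}
    (h_map : f.map τ₁ = f.map τ₂) (h_comp : τ₁ ≫ α = τ₂ ≫ α) : τ₁ = τ₂ :=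
  (hα (τ₂ ≫ α) (f.map τ₂) (f.map_comp _ _)).unique ⟨h_map, h_comp⟩ ⟨rfl, rfl⟩

theorem fOne_map_bijective_of_isCartesian {α β : Arrow A} (hβ : IsCartesian f β.hom) :
    Function.Bijective ((fOne f).map : (α ⟶ β) → ((fOne f).obj α ⟶ (fOne f).obj β)) := by
  constructor
  · intro g₁ g₂ h
    have h_left : f.map g₁.left = f.map g₂.left := (congrArg CommaMorphism.left h :)
    have h_right : g₁.right = g₂.right := (congrArg CommaMorphism.right h :)
    refine Arrow.hom_ext _ _ (hβ.hom_ext h_left ?_) h_right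
    rw [Arrow.w, Arrow.w, h_right]
  · intro ψ
    obtain ⟨τ, ⟨hτ_map, hτ_comp⟩, -⟩ :=
      hβ (α.hom ≫ ψ.right) ψ.left ((f.map_comp _ _).trans ψ.w.symm)
    exact ⟨Arrow.homMk τ ψ.right hτ_comp, Comma.hom_ext _ _ hτ_map rfl⟩

theorem IsGrothendieckFibration.exists_fOne_obj_eq (hf : IsGrothendieckFibration f)
    (X : Comma (𝟭 B) f) : ∃ α : Arrow A, (fOne f).obj α = X ∧ IsCartesian f α.hom := by
  obtain ⟨b, a, β⟩ := X
  obtain ⟨a', α, rfl, hα, hα_cart⟩ := hf a b β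
  rw [eqToHom_refl, Category.id_comp] at hα
  exact ⟨Arrow.mk α, by simp [fOne, hα], hα_cart⟩

end Fibration

/-- (Chevalley criterion, `only if` direction) If `f` is a Grothendieck fibration, then the
canonical functor `f₁ : (A ↓ A) ⥤ (B ↓ f)` admits a right adjoint whose counit is an identity. -/
theorem stmt8 (f : A ⥤ B) (hf : IsGrothendieckFibration f) :
    ∃ (r : Comma (𝟭 B) f ⥤ Arrow A) (adj : fOne f ⊣ r)
      (w : r ⋙ fOne f = 𝟭 (Comma (𝟭 B) f)), adj.counit = eqToHom w := by
  choose lift h_lift h_cart using hf.exists_fOne_obj_eq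
  exact exists_rightAdjoint_counit_eq_eqToHom_of_bijective_map (fOne f) lift h_lift
    fun _ X => fOne_map_bijective_of_isCartesian (h_cart X)
end

section
/- Let f : A ⥤ B be a functor. Then f is a Grothendieck fibration if and only if the functor v_f : A ⥤ (B ↓ f), sending a to (f a, a, 1_{f a}), admits a right adjoint r such that the projection R f : (B ↓ f) ⥤ B composed with nothing changes: R f ∘ v_f = f, r is a functor over B (i.e. f ∘ r = R f), and the unit and counit of the adjunction are vertical over B (their images under f and R f respectively are identities). -/
open CategoryTheory

universe v₁ v₂ u₁ u₂

variable {A : Type u₁} {B : Type u₂} [Category.{v₁} A] [Category.{v₂} B]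

/-- The unit functor `v_f : A ⥤ (B ↓ f)`, `a ↦ (f a, a, 𝟙 (f a))`. -/
def vF (f : A ⥤ B) : A ⥤ Comma (𝟭 B) f where
  obj a := { left := f.obj a, right := a, hom := 𝟙 (f.obj a) }
  map u := { left := f.map u, right := u, w := by simp }

/-!
A morphism `ε : v_f a' ⟶ x` of `B ↓ f` whose first component is invertible is couniversal from
`v_f` (every `v_f y ⟶ x` factors uniquely through it) exactly when its second component is
`f`-cartesian: unwinding a morphism `v_f y ⟶ x` gives precisely the data `(g, τ')` of the
cartesian lifting problem. Hence a fibration supplies, for each `x = (b, a, β)`, a couniversal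
arrow with vertical first component, i.e. a right adjoint of `v_f` with vertical counit;
conversely the counit of such an adjunction consists of cartesian lifts. The triangle identity
and naturality of the counit then make the unit vertical and the right adjoint a functor over `B`.
-/

section

variable {C D : Type*} [Category C] [Category D] {F : C ⥤ D} {G : D → C}
  (ε : ∀ Y, F.obj (G Y) ⟶ Y) (hε : ∀ X Y, Function.Bijective fun g : X ⟶ G Y => F.map g ≫ ε Y)

noncomputable def rightAdjointOfCouniversal : D ⥤ C :=
  Adjunction.rightAdjointOfEquiv (fun X Y => (Equiv.ofBijective _ (hε X Y)).symm)
    fun X' X Y u m => by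
      simp only [Equiv.symm_apply_eq, Equiv.ofBijective_apply, Functor.map_comp, Category.assoc]
      exact congrArg (F.map u ≫ ·) (Equiv.ofBijective_apply_symm_apply _ (hε X Y) m).symm

noncomputable def adjunctionOfCouniversal : F ⊣ rightAdjointOfCouniversal ε hε :=
  Adjunction.adjunctionOfEquivRight _ _

lemma adjunctionOfCouniversal_counit_app (Y : D) :
    (adjunctionOfCouniversal ε hε).counit.app Y = ε Y := by
  change F.map (𝟙 (G Y)) ≫ ε Y = ε Y
  rw [F.map_id, Category.id_comp]

end

section

variable {f : A ⥤ B}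

lemma vF_map_comp_eq_iff {y a' : A} {x : Comma (𝟭 B) f} (τ : y ⟶ a')
    (ε : (vF f).obj a' ⟶ x) (m : (vF f).obj y ⟶ x) :
    (vF f).map τ ≫ ε = m ↔ f.map τ ≫ ε.left = m.left ∧ τ ≫ ε.right = m.right := by
  constructor
  · rintro rfl
    exact ⟨rfl, rfl⟩
  · rintro ⟨hl, hr⟩
    exact Comma.hom_ext _ _ hl hr

lemma map_right_eq_left_comp_hom {y : A} {x : Comma (𝟭 B) f} (m : (vF f).obj y ⟶ x) :
    f.map m.right = m.left ≫ x.hom := by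
  simpa [vF] using m.w.symm

lemma isCartesian_right_iff_bijective {a' : A} {x : Comma (𝟭 B) f}
    (ε : (vF f).obj a' ⟶ x) [IsIso ε.left] :
    IsCartesian f ε.right ↔
      ∀ y : A, Function.Bijective fun τ : y ⟶ a' => (vF f).map τ ≫ ε := by
  have hε : f.map (X := a') ε.right = ε.left ≫ x.hom := map_right_eq_left_comp_hom ε
  simp only [Function.bijective_iff_existsUnique, vF_map_comp_eq_iff]
  constructor
  · intro hcart y m
    have hm : f.map m.right = (m.left ≫ inv ε.left) ≫ f.map (X := a') ε.right := by
      rw [hε, Category.assoc, IsIso.inv_hom_id_assoc ε.left]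
      exact map_right_eq_left_comp_hom m
    obtain ⟨τ, ⟨hτ, hτ'⟩, huniq⟩ := hcart m.right _ hm
    exact ⟨τ, ⟨(IsIso.eq_comp_inv ε.left).1 hτ, hτ'⟩,
      fun σ ⟨hσ, hσ'⟩ => huniq σ ⟨(IsIso.eq_comp_inv ε.left).2 hσ, hσ'⟩⟩
  · intro huniv y τ' g hg
    let m : (vF f).obj y ⟶ x :=
      { left := g ≫ ε.left, right := τ'
        w := by simpa [vF, hg, hε] using Category.assoc g ε.left x.hom }
    obtain ⟨τ, ⟨hτ, hτ'⟩, huniq⟩ := huniv y m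
    exact ⟨τ, ⟨(cancel_mono ε.left).1 hτ, hτ'⟩,
      fun σ ⟨hσ, hσ'⟩ => huniq σ ⟨congrArg (· ≫ ε.left) hσ, hσ'⟩⟩

lemma isGrothendieckFibration_iff_exists_couniversal (f : A ⥤ B) :
    IsGrothendieckFibration f ↔
      ∀ x : Comma (𝟭 B) f, ∃ (a' : A) (ε : (vF f).obj a' ⟶ x) (h : f.obj a' = x.left),
        ε.left = eqToHom h ∧ ∀ y : A, Function.Bijective fun τ : y ⟶ a' => (vF f).map τ ≫ ε := by
  constructor
  · intro hf x
    obtain ⟨a', α, h, hα, hcart⟩ := hf x.right x.left x.hom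
    let ε : (vF f).obj a' ⟶ x := { left := eqToHom h, right := α, w := by simp [vF, hα] }
    have : IsIso ε.left := inferInstanceAs (IsIso (eqToHom h))
    exact ⟨a', ε, h, rfl, (isCartesian_right_iff_bijective ε).1 hcart⟩
  · intro hf a b β
    obtain ⟨a', ε, h, hleft, huniv⟩ := hf { left := b, right := a, hom := β }
    have : IsIso ε.left := by rw [hleft]; exact inferInstanceAs (IsIso (eqToHom h))
    refine ⟨a', ε.right, h, ?_, (isCartesian_right_iff_bijective ε).2 huniv⟩
    exact (map_right_eq_left_comp_hom ε).trans (by rw [hleft]; rfl)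

end


section

variable {f : A ⥤ B} {r : Comma (𝟭 B) f ⥤ A} (adj : vF f ⊣ r)
  (h : ∀ x, f.obj (r.obj x) = x.left)

lemma functor_comp_eq_fst_of_counit_left_eq_eqToHom
    (hε : ∀ x, (adj.counit.app x).left = eqToHom (h x)) : r ⋙ f = Comma.fst (𝟭 B) f := by
  refine CategoryTheory.Functor.ext h fun x y u => ?_
  have hu := congrArg CommaMorphism.left (adj.counit.naturality u)
  simp only [Functor.comp_map, Comma.comp_left, hε, Functor.id_map] at hu
  exact ((comp_eqToHom_iff _ _ _).1 hu).trans (Category.assoc _ _ _)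

lemma map_unit_app_eq_eqToHom_of_counit_left_eq_eqToHom
    (hε : ∀ x, (adj.counit.app x).left = eqToHom (h x)) (a : A) :
    f.map (adj.unit.app a) = eqToHom (h ((vF f).obj a)).symm := by
  have ha := congrArg CommaMorphism.left (adj.left_triangle_components a)
  simp only [Comma.comp_left, hε] at ha
  exact ((comp_eqToHom_iff _ _ _).1 ha).trans (Category.id_comp _)

lemma exists_vertical_of_counit_left_eq_eqToHom
    (hε : ∀ x, (adj.counit.app x).left = eqToHom (h x)) :
    ∃ (_ : vF f ⋙ Comma.fst (𝟭 B) f = f)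
      (_ : r ⋙ f = Comma.fst (𝟭 B) f)
      (hu : 𝟭 A ⋙ f = (vF f ⋙ r) ⋙ f)
      (hc : (r ⋙ vF f) ⋙ Comma.fst (𝟭 B) f = 𝟭 (Comma (𝟭 B) f) ⋙ Comma.fst (𝟭 B) f),
      Functor.whiskerRight adj.unit f = eqToHom hu ∧
        Functor.whiskerRight adj.counit (Comma.fst (𝟭 B) f) = eqToHom hc := by
  have hvf : vF f ⋙ Comma.fst (𝟭 B) f = f := rfl
  have hr := functor_comp_eq_fst_of_counit_left_eq_eqToHom adj h hε
  have hu : 𝟭 A ⋙ f = (vF f ⋙ r) ⋙ f := by rw [Functor.assoc, hr, hvf, Functor.id_comp]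
  have hc : (r ⋙ vF f) ⋙ Comma.fst (𝟭 B) f = 𝟭 (Comma (𝟭 B) f) ⋙ Comma.fst (𝟭 B) f := by
    rw [Functor.assoc, hvf, hr, Functor.id_comp]
  refine ⟨hvf, hr, hu, hc, NatTrans.ext (funext fun a => ?_), NatTrans.ext (funext fun x => ?_)⟩
  · rw [Functor.whiskerRight_app, eqToHom_app]
    exact map_unit_app_eq_eqToHom_of_counit_left_eq_eqToHom adj h hε a
  · rw [Functor.whiskerRight_app, eqToHom_app]
    exact hε x

end

/-- `f` is a Grothendieck fibration iff `v_f : A ⥤ B ↓ f` admits a right adjoint `r` which is a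
functor over `B` (`f ∘ r = R f`, where `R f : B ↓ f ⥤ B` is the projection, and
`R f ∘ v_f = f`), with unit and counit vertical over `B`. -/
theorem stmt9 (f : A ⥤ B) :
    IsGrothendieckFibration f ↔
      ∃ (r : Comma (𝟭 B) f ⥤ A) (adj : vF f ⊣ r)
        (hvf : vF f ⋙ Comma.fst (𝟭 B) f = f)
        (hr : r ⋙ f = Comma.fst (𝟭 B) f)
        (hu : 𝟭 A ⋙ f = (vF f ⋙ r) ⋙ f)
        (hc : (r ⋙ vF f) ⋙ Comma.fst (𝟭 B) f =
          𝟭 (Comma (𝟭 B) f) ⋙ Comma.fst (𝟭 B) f),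
        Functor.whiskerRight adj.unit f = eqToHom hu ∧
          Functor.whiskerRight adj.counit (Comma.fst (𝟭 B) f) = eqToHom hc := by
  rw [isGrothendieckFibration_iff_exists_couniversal]
  constructor
  · intro hf
    choose r ε h hleft huniv using hf
    let adj := adjunctionOfCouniversal ε fun y x => huniv x y
    have hε : ∀ x, (adj.counit.app x).left = eqToHom (h x) := fun x => by
      rw [adjunctionOfCouniversal_counit_app, hleft]
    exact ⟨_, adj, exists_vertical_of_counit_left_eq_eqToHom adj h hε⟩
  · rintro ⟨r, adj, -, hr, -, hc, -, hcounit⟩ x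
    refine ⟨r.obj x, adj.counit.app x, Functor.congr_obj hr x, ?_, fun y => ?_⟩
    · exact (NatTrans.congr_app hcounit x).trans (eqToHom_app hc x)
    · simpa only [← adj.homEquiv_counit] using (adj.homEquiv y x).symm.bijective
end

section
/- Let f : A ⥤ B be a functor whose fibres are groupoids (every f-vertical morphism is invertible), and suppose f is an isofibration. Then f is conservative. -/
open CategoryTheory

universe v₁ v₂ u₁ u₂

/-- If `f` is an isofibration whose fibres are groupoids (every `f`-vertical morphism is
invertible), then `f` is conservative. -/
theorem stmt12 {A : Type u₁} {B : Type u₂} [Category.{v₁} A] [Category.{v₂} B]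
    (f : A ⥤ B) (hf : IsIsofibration f)
    (hgpd : ∀ {a a' : A} (u : a ⟶ a') (h : f.obj a = f.obj a'),
      f.map u = eqToHom h → IsIso u) :
    ∀ {a a' : A} (u : a ⟶ a'), IsIso (f.map u) → IsIso u := by
  intro a a' u hu
  obtain ⟨a'', σ, h, hσ⟩ := hf a' (f.obj a) (asIso (f.map u))
  have hσinv : f.map σ.inv = inv (f.map u) ≫ eqToHom h.symm := by
    have hm : IsIso (f.map σ.hom) := (f.mapIso σ).isIso_hom
    rw [← cancel_mono (f.map σ.hom), ← f.map_comp]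
    simp [hσ]
  have hv : f.map (u ≫ σ.inv) = eqToHom (h.symm) := by
    rw [f.map_comp, hσinv]
    simp
  have : IsIso (u ≫ σ.inv) := hgpd _ _ hv
  have : u = (u ≫ σ.inv) ≫ σ.hom := by simp
  rw [this]
  infer_instance
end

section
/- Let f : A ⥤ B be a Grothendieck fibration and let π₀ denote the connected-components reflection of categories into discrete categories applied fibrewise: define Q to be the category obtained from the fibration B ↓ f by identifying, in each fibre over b ∈ B, objects in the same connected component (i.e. Q is the Grothendieck construction of b ↦ π₀(fibre of f over b) viewed via the pseudofunctor associated to f). Then the induced comparison functor s : Q ⥤ B is a discrete fibration, and the canonical functor q : A ⥤ Q satisfies s ∘ q = f. -/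
open CategoryTheory

universe v₁ v₂ v₃ u₁ u₂ u₃

section Defs

variable {A : Type u₁} {B : Type u₂} [Category.{v₁} A] [Category.{v₂} B]

/-- `f` is a discrete fibration: every `β : b ⟶ f a` admits a unique lift with codomain `a`. -/
def IsDiscreteFibration (f : A ⥤ B) : Prop :=
  ∀ (a : A) (b : B) (β : b ⟶ f.obj a),
    ∃! l : (a' : A) × (a' ⟶ a),
      ∃ h : f.obj l.1 = b, f.map l.2 = eqToHom h ≫ β

end Defs

/-!
The objects of `Q` are the connected components of the fibres of `f`, i.e. the classes of the
equivalence relation generated by vertical morphisms, and its morphisms `x ⟶ y` are the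
morphisms of `B` that are images under `f` of morphisms between representatives.

Everything rests on one consequence of cartesianness: a morphism `u : a ⟶ e` factors through a
cartesian lift of `f u` as a vertical morphism followed by the lift. Hence two morphisms with the
same codomain and the same image under `f` have vertically connected domains and become equal
(up to `eqToHom`) under every functor killing vertical morphisms. Together with moving the codomain
of a morphism along a vertical morphism (forwards by composing, backwards by a cartesian lift),
this shows that these images compose, that `Q ⥤ B` is a discrete fibration, and that every functor
killing vertical morphisms descends uniquely to `Q`.
-/

namespace CategoryTheory.Arrow

variable {T : Type*} [Category T]

lemma mk_comp_eq_mk_comp {X Y Z X' Y' Z' : T} {g : X ⟶ Y} {h : Y ⟶ Z} {g' : X' ⟶ Y'}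
    {h' : Y' ⟶ Z'} (hg : Arrow.mk g = Arrow.mk g') (hh : Arrow.mk h = Arrow.mk h') :
    Arrow.mk (g ≫ h) = Arrow.mk (g' ≫ h') := by
  obtain ⟨rfl, rfl, rfl⟩ := (mk_eq_mk_iff g g').1 hg
  obtain ⟨-, rfl, rfl⟩ := (mk_eq_mk_iff h h').1 hh
  simp

lemma mk_map_eq_mk_map {D : Type*} [Category D] (F : T ⥤ D) {X Y X' Y' : T} {g : X ⟶ Y}
    {g' : X' ⟶ Y'} (h : Arrow.mk g = Arrow.mk g') : Arrow.mk (F.map g) = Arrow.mk (F.map g') := by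
  simpa using congrArg F.mapArrow.obj h

lemma sigma_mk_eq_of_mk_eq {X Y Y' : T} {g : Y ⟶ X} {g' : Y' ⟶ X}
    (h : Arrow.mk g = Arrow.mk g') : (⟨Y, g⟩ : (Y : T) × (Y ⟶ X)) = ⟨Y', g'⟩ := by
  obtain ⟨rfl, -, rfl⟩ := (mk_eq_mk_iff g g').1 h
  simp

end CategoryTheory.Arrow

section Fibration

variable {A : Type u₁} {B : Type u₂} [Category.{v₁} A] [Category.{v₂} B] (f : A ⥤ B)
variable {X : Type u₃} [Category.{v₃} X]

def IsVertical {a a' : A} (u : a ⟶ a') : Prop :=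
  ∃ h : f.obj a = f.obj a', f.map u = eqToHom h

def KillsVertical (t : A ⥤ X) : Prop :=
  ∀ {a a' : A} (u : a ⟶ a') (h : f.obj a = f.obj a'), f.map u = eqToHom h →
    ∃ e : t.obj a = t.obj a', t.map u = eqToHom e

def verticalSetoid : Setoid A :=
  Relation.EqvGen.setoid fun a a' => ∃ u : a ⟶ a', IsVertical f u

variable {f}

lemma verticalSetoid_of_isVertical {a a' : A} {u : a ⟶ a'} (hu : IsVertical f u) :
    verticalSetoid f a a' :=
  Relation.EqvGen.rel _ _ ⟨u, hu⟩

lemma killsVertical_self : KillsVertical f f := fun _ h hu => ⟨h, hu⟩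

namespace KillsVertical

variable {t : A ⥤ X}

lemma obj_eq (ht : KillsVertical f t) {a a' : A} (h : verticalSetoid f a a') :
    t.obj a = t.obj a' :=
  Setoid.eqvGen_le (s := Setoid.ker t.obj) (fun _ _ ⟨u, h, hu⟩ => (ht u h hu).1) h

lemma arrow_mk_map_vertical_comp (ht : KillsVertical f t) {a d e : A} {i : a ⟶ d}
    (hi : IsVertical f i) (g : d ⟶ e) : Arrow.mk (t.map (i ≫ g)) = Arrow.mk (t.map g) := by
  obtain ⟨h, hi⟩ := hi
  obtain ⟨e, he⟩ := ht i h hi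
  simp [he]

lemma arrow_mk_map_comp_vertical (ht : KillsVertical f t) {a d e : A} (g : a ⟶ d)
    {w : d ⟶ e} (hw : IsVertical f w) : Arrow.mk (t.map (g ≫ w)) = Arrow.mk (t.map g) := by
  obtain ⟨h, hw⟩ := hw
  obtain ⟨e, he⟩ := ht w h hw
  simp [he]

end KillsVertical

lemma IsCartesian.exists_isVertical_comp_eq {a d e : A} {α : d ⟶ e} (hα : IsCartesian f α)
    (u : a ⟶ e) (h : Arrow.mk (f.map u) = Arrow.mk (f.map α)) :
    ∃ i : a ⟶ d, IsVertical f i ∧ i ≫ α = u := by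
  obtain ⟨h₁, _, hu⟩ := (Arrow.mk_eq_mk_iff _ _).1 h
  obtain ⟨i, ⟨hi, hiα⟩, -⟩ := hα u (eqToHom h₁) (by simpa using hu)
  exact ⟨i, ⟨h₁, hi⟩, hiα⟩

variable (f) in
def Transports (t : A ⥤ X) (x y : A) : Prop :=
  ∀ ⦃a : A⦄ (u : a ⟶ x), ∃ (c : A) (v : c ⟶ y), verticalSetoid f a c ∧
    Arrow.mk (f.map v) = Arrow.mk (f.map u) ∧ Arrow.mk (t.map v) = Arrow.mk (t.map u)

namespace Transports

variable {t : A ⥤ X}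

lemma refl (x : A) : Transports f t x x :=
  fun a u => ⟨a, u, (verticalSetoid f).refl' a, rfl, rfl⟩

lemma trans {x y z : A} (hxy : Transports f t x y) (hyz : Transports f t y z) :
    Transports f t x z := by
  intro a u
  obtain ⟨c, v, hac, hfv, htv⟩ := hxy u
  obtain ⟨c', v', hcc', hfv', htv'⟩ := hyz v
  exact ⟨c', v', (verticalSetoid f).trans' hac hcc', hfv'.trans hfv, htv'.trans htv⟩

lemma of_isVertical (ht : KillsVertical f t) {x y : A} {w : x ⟶ y} (hw : IsVertical f w) :
    Transports f t x y :=
  fun a u => ⟨a, u ≫ w, (verticalSetoid f).refl' a,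
    killsVertical_self.arrow_mk_map_comp_vertical u hw, ht.arrow_mk_map_comp_vertical u hw⟩

end Transports

namespace IsGrothendieckFibration

variable {t : A ⥤ X}

lemma exists_common_factorization (hf : IsGrothendieckFibration f) {a c e : A}
    (u : a ⟶ e) (v : c ⟶ e) (h : Arrow.mk (f.map u) = Arrow.mk (f.map v)) :
    ∃ (d : A) (α : d ⟶ e) (i : a ⟶ d) (j : c ⟶ d),
      IsVertical f i ∧ IsVertical f j ∧ i ≫ α = u ∧ j ≫ α = v := by
  obtain ⟨d, α, _, hαv, hα⟩ := hf e (f.obj c) (f.map v)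
  have hαv : Arrow.mk (f.map α) = Arrow.mk (f.map v) := by simp [hαv]
  obtain ⟨i, hi, hiα⟩ := hα.exists_isVertical_comp_eq u (h.trans hαv.symm)
  obtain ⟨j, hj, hjα⟩ := hα.exists_isVertical_comp_eq v hαv.symm
  exact ⟨d, α, i, j, hi, hj, hiα, hjα⟩

lemma verticalSetoid_of_arrow_mk_map_eq (hf : IsGrothendieckFibration f) {a c e : A}
    (u : a ⟶ e) (v : c ⟶ e) (h : Arrow.mk (f.map u) = Arrow.mk (f.map v)) :
    verticalSetoid f a c := by
  obtain ⟨d, α, i, j, hi, hj, -, -⟩ := hf.exists_common_factorization u v h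
  exact (verticalSetoid f).trans' (verticalSetoid_of_isVertical hi)
    ((verticalSetoid f).symm' (verticalSetoid_of_isVertical hj))

lemma arrow_mk_map_eq_of_arrow_mk_map_eq (hf : IsGrothendieckFibration f)
    (ht : KillsVertical f t) {a c e : A} (u : a ⟶ e) (v : c ⟶ e)
    (h : Arrow.mk (f.map u) = Arrow.mk (f.map v)) : Arrow.mk (t.map u) = Arrow.mk (t.map v) := by
  obtain ⟨d, α, i, j, hi, hj, rfl, rfl⟩ := hf.exists_common_factorization u v h
  rw [ht.arrow_mk_map_vertical_comp hi, ht.arrow_mk_map_vertical_comp hj]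

lemma transports_of_isVertical_symm (hf : IsGrothendieckFibration f) (ht : KillsVertical f t)
    {x y : A} {w : x ⟶ y} (hw : IsVertical f w) : Transports f t y x := by
  intro a u
  obtain ⟨d, α, _, hα, -⟩ := hf x (f.obj a) (f.map u ≫ eqToHom hw.1.symm)
  have hαw : Arrow.mk (f.map (α ≫ w)) = Arrow.mk (f.map u) := by
    rw [killsVertical_self.arrow_mk_map_comp_vertical α hw, hα]
    simp
  refine ⟨d, α, (verticalSetoid f).symm' (hf.verticalSetoid_of_arrow_mk_map_eq _ _ hαw),
    by simp [hα], ?_⟩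
  rw [← ht.arrow_mk_map_comp_vertical α hw]
  exact hf.arrow_mk_map_eq_of_arrow_mk_map_eq ht _ _ hαw

lemma transports (hf : IsGrothendieckFibration f) (ht : KillsVertical f t) {x y : A}
    (h : verticalSetoid f x y) : Transports f t x y :=
  -- `Transports` is not symmetric, so we induct on its symmetrization.
  let s : Setoid A :=
    { r x y := Transports f t x y ∧ Transports f t y x
      iseqv := ⟨fun x => ⟨.refl x, .refl x⟩, fun h => ⟨h.2, h.1⟩,
        fun h h' => ⟨h.1.trans h'.1, h'.2.trans h.2⟩⟩ }
  (Setoid.eqvGen_le (s := s) (fun _ _ ⟨_, hw⟩ =>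
    ⟨.of_isVertical ht hw, hf.transports_of_isVertical_symm ht hw⟩) h).1

lemma arrow_mk_map_eq_of_rel (hf : IsGrothendieckFibration f) (ht : KillsVertical f t)
    {a a' c c' : A} (u : a ⟶ a') (v : c ⟶ c') (h' : verticalSetoid f a' c')
    (h : Arrow.mk (f.map u) = Arrow.mk (f.map v)) : Arrow.mk (t.map u) = Arrow.mk (t.map v) := by
  obtain ⟨a₂, u₂, -, hfu, htu⟩ := hf.transports ht h' u
  rw [← htu]
  exact hf.arrow_mk_map_eq_of_arrow_mk_map_eq ht u₂ v (hfu.trans h)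

end IsGrothendieckFibration

end Fibration

section FiberComponent

variable {A : Type u₁} {B : Type u₂} [Category.{v₁} A] [Category.{v₂} B] (f : A ⥤ B)
variable {X : Type u₃} [Category.{v₃} X]

-- `hf` is a parameter only so that the category instance, whose composition needs it, applies.
structure FiberComponent (hf : IsGrothendieckFibration f) : Type (max u₁ u₂) where
  as : Quotient (verticalSetoid f)

namespace FiberComponent

variable {f} {hf : IsGrothendieckFibration f}

lemma mk_eq_mk {a a' : A} :
    (⟨⟦a⟧⟩ : FiberComponent f hf) = ⟨⟦a'⟧⟩ ↔ verticalSetoid f a a' :=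
  ⟨fun h => Quotient.exact (congrArg as h), fun h => congrArg _ (Quotient.sound h)⟩

def base (x : FiberComponent f hf) : B :=
  Quotient.lift f.obj (fun _ _ => killsVertical_self.obj_eq) x.as

def IsImage (x y : FiberComponent f hf) (β : x.base ⟶ y.base) : Prop :=
  ∃ (a a' : A) (u : a ⟶ a'), x = ⟨⟦a⟧⟩ ∧ y = ⟨⟦a'⟧⟩ ∧ Arrow.mk (f.map u) = Arrow.mk β

lemma isImage_id (x : FiberComponent f hf) : IsImage x x (𝟙 x.base) := by
  obtain ⟨⟨a⟩⟩ := x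
  exact ⟨a, a, 𝟙 a, rfl, rfl, by simp; rfl⟩

lemma IsImage.comp {x y z : FiberComponent f hf} {β : x.base ⟶ y.base} {γ : y.base ⟶ z.base}
    (hβ : IsImage x y β) (hγ : IsImage y z γ) : IsImage x z (β ≫ γ) := by
  obtain ⟨a, a', u, rfl, rfl, hu⟩ := hβ
  obtain ⟨c, c', v, hc, rfl, hv⟩ := hγ
  obtain ⟨a₂, u₂, ha, hfu, -⟩ := hf.transports killsVertical_self (mk_eq_mk.1 hc) u
  refine ⟨a₂, c', u₂ ≫ v, mk_eq_mk.2 ha, rfl, ?_⟩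
  rw [f.map_comp]
  exact Arrow.mk_comp_eq_mk_comp (hfu.trans hu) hv

@[ext]
structure Hom (x y : FiberComponent f hf) : Type (max v₁ v₂) where
  base : x.base ⟶ y.base
  isImage : IsImage x y base

instance : Category.{max v₁ v₂} (FiberComponent f hf) where
  Hom := Hom
  id x := ⟨𝟙 x.base, isImage_id x⟩
  comp m n := ⟨m.base ≫ n.base, m.isImage.comp n.isImage⟩

variable (f hf) in
def proj : FiberComponent f hf ⥤ B where
  obj := base
  map m := m.base

instance : (proj f hf).Faithful where
  map_injective := Hom.ext

variable (f hf) in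
def quotient : A ⥤ FiberComponent f hf where
  obj a := ⟨⟦a⟧⟩
  map {a a'} u := ⟨f.map u, a, a', u, rfl, rfl, rfl⟩
  map_id a := (proj f hf).map_injective (f.map_id a)
  map_comp u v := (proj f hf).map_injective (f.map_comp u v)

lemma quotient_obj_surjective : Function.Surjective (quotient f hf).obj := by
  rintro ⟨⟨a⟩⟩
  exact ⟨a, rfl⟩

lemma quotient_comp_proj : quotient f hf ⋙ proj f hf = f := rfl

lemma killsVertical_quotient : KillsVertical f (quotient f hf) := fun _ h hu =>
  have e := mk_eq_mk.2 (verticalSetoid_of_isVertical ⟨h, hu⟩)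
  ⟨e, (proj f hf).map_injective (hu.trans (eqToHom_map (proj f hf) e).symm)⟩

lemma exists_arrow_mk_eq {x y : FiberComponent f hf} (m : x ⟶ y) :
    ∃ (a a' : A) (u : a ⟶ a'), Arrow.mk m = Arrow.mk ((quotient f hf).map u) := by
  obtain ⟨a, a', u, rfl, rfl, hu⟩ := m.isImage
  exact ⟨a, a', u, congrArg Arrow.mk ((proj f hf).map_injective ((Arrow.mk_inj _ _).1 hu).symm)⟩

lemma exists_arrow_mk_eq_of_comp {x y z : FiberComponent f hf} (m : x ⟶ y) (n : y ⟶ z) :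
    ∃ (a b c : A) (u : a ⟶ b) (v : b ⟶ c), Arrow.mk m = Arrow.mk ((quotient f hf).map u) ∧
      Arrow.mk n = Arrow.mk ((quotient f hf).map v) := by
  obtain ⟨a, a', u, hu⟩ := exists_arrow_mk_eq m
  obtain ⟨b, c, v, hv⟩ := exists_arrow_mk_eq n
  have hb : verticalSetoid f a' b :=
    mk_eq_mk.1 ((congrArg Arrow.right hu).symm.trans (congrArg Arrow.left hv))
  obtain ⟨a₂, u₂, -, -, hqu⟩ := hf.transports killsVertical_quotient hb u
  exact ⟨a₂, b, c, u₂, v, hu.trans hqu.symm, hv⟩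

lemma isDiscreteFibration_proj : IsDiscreteFibration (proj f hf) := by
  intro x b β
  obtain ⟨a, rfl⟩ := quotient_obj_surjective x
  obtain ⟨c, α, hc, hα, -⟩ := hf a b β
  refine ⟨⟨(quotient f hf).obj c, (quotient f hf).map α⟩, ⟨hc, hα⟩, ?_⟩
  rintro ⟨y, m⟩ ⟨h, hm⟩
  obtain ⟨a₁, a₁', u, hu⟩ := exists_arrow_mk_eq m
  obtain ⟨a₂, u₂, -, -, hqu₂⟩ :=
    hf.transports killsVertical_quotient (mk_eq_mk.1 (congrArg Arrow.right hu).symm) u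
  have hfu₂ : Arrow.mk (f.map u₂) = Arrow.mk (f.map α) :=
    calc Arrow.mk (f.map u₂) = Arrow.mk ((proj f hf).map m) :=
          Arrow.mk_map_eq_mk_map (proj f hf) (hu.trans hqu₂.symm).symm
      _ = Arrow.mk β := (congrArg Arrow.mk hm).trans (Arrow.arrow_mk_eqToHom_comp β h)
      _ = Arrow.mk (f.map α) :=
          ((congrArg Arrow.mk hα).trans (Arrow.arrow_mk_eqToHom_comp β hc)).symm
  exact Arrow.sigma_mk_eq_of_mk_eq ((hu.trans hqu₂.symm).trans
    (hf.arrow_mk_map_eq_of_arrow_mk_map_eq killsVertical_quotient u₂ α hfu₂))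

section Lift

variable (t : A ⥤ X) (ht : KillsVertical f t)

def liftObj (x : FiberComponent f hf) : X :=
  Quotient.lift t.obj (fun _ _ => ht.obj_eq) x.as

noncomputable def liftMap {x y : FiberComponent f hf} (m : x ⟶ y) :
    liftObj t ht x ⟶ liftObj t ht y :=
  have hu := (exists_arrow_mk_eq m).choose_spec.choose_spec.choose_spec
  eqToHom (congrArg (liftObj t ht) (congrArg Arrow.left hu)) ≫
    t.map (exists_arrow_mk_eq m).choose_spec.choose_spec.choose ≫
    eqToHom (congrArg (liftObj t ht) (congrArg Arrow.right hu)).symm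

lemma arrow_mk_liftMap {x y : FiberComponent f hf} (m : x ⟶ y) {a a' : A} (u : a ⟶ a')
    (hu : Arrow.mk m = Arrow.mk ((quotient f hf).map u)) :
    Arrow.mk (liftMap t ht m) = Arrow.mk (t.map u) := by
  have hu₀ := (exists_arrow_mk_eq m).choose_spec.choose_spec.choose_spec
  have hq := hu₀.symm.trans hu
  calc Arrow.mk (liftMap t ht m) = Arrow.mk (t.map _) :=
        (Arrow.arrow_mk_eqToHom_comp _ _).trans (Arrow.arrow_mk_comp_eqToHom _ _)
    _ = Arrow.mk (t.map u) := hf.arrow_mk_map_eq_of_rel ht _ u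
      (mk_eq_mk.1 (congrArg Arrow.right hq)) (Arrow.mk_map_eq_mk_map (proj f hf) hq)

variable (hf) in
noncomputable def lift : FiberComponent f hf ⥤ X where
  obj := liftObj t ht
  map := liftMap t ht
  map_id x := by
    obtain ⟨a, rfl⟩ := quotient_obj_surjective x
    refine (Arrow.mk_inj _ _).1 ((arrow_mk_liftMap t ht _ (𝟙 a) ?_).trans ?_)
    · rw [(quotient f hf).map_id]
    · rw [t.map_id]
      rfl
  map_comp m n := by
    obtain ⟨a, b, c, u, v, hu, hv⟩ := exists_arrow_mk_eq_of_comp m n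
    refine (Arrow.mk_inj _ _).1 ?_
    rw [arrow_mk_liftMap t ht (m ≫ n) (u ≫ v)
      (by rw [(quotient f hf).map_comp]; exact Arrow.mk_comp_eq_mk_comp hu hv), t.map_comp]
    exact Arrow.mk_comp_eq_mk_comp (arrow_mk_liftMap t ht m u hu).symm
      (arrow_mk_liftMap t ht n v hv).symm

lemma quotient_comp_lift : quotient f hf ⋙ lift hf t ht = t :=
  Arrow.functor_ext fun _ _ u => arrow_mk_liftMap t ht _ u rfl

lemma eq_lift {t' : FiberComponent f hf ⥤ X} (h : quotient f hf ⋙ t' = t) :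
    t' = lift hf t ht := by
  subst h
  refine Arrow.functor_ext fun x y m => ?_
  obtain ⟨a, a', u, hu⟩ := exists_arrow_mk_eq m
  exact (Arrow.mk_map_eq_mk_map t' hu).trans (arrow_mk_liftMap _ ht m u hu).symm

end Lift

end FiberComponent

end FiberComponent

/-- For a Grothendieck fibration `f : A ⥤ B`, identifying in each fibre the objects lying in
the same connected component (i.e. applying `π₀` fibrewise to the associated pseudofunctor)
yields a category `Q` with a canonical functor `q : A ⥤ Q` (the coidentifier of the
`f`-vertical morphisms: `q` kills them and is universal with this property) and a comparison
functor `s : Q ⥤ B` which is a discrete fibration and satisfies `s ∘ q = f`. -/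
theorem stmt13 {A : Type u₁} {B : Type u₂} [Category.{v₁} A] [Category.{v₂} B]
    (f : A ⥤ B) (hf : IsGrothendieckFibration f) :
    ∃ (Q : Cat.{max v₁ v₂, max u₁ u₂}) (q : A ⥤ Q) (s : Q ⥤ B),
      q ⋙ s = f ∧
      IsDiscreteFibration s ∧
      (∀ {a a' : A} (u : a ⟶ a') (h : f.obj a = f.obj a'), f.map u = eqToHom h →
        ∃ e : q.obj a = q.obj a', q.map u = eqToHom e) ∧
      (∀ {X : Type u₃} [Category.{v₃} X] (t : A ⥤ X),
        (∀ {a a' : A} (u : a ⟶ a') (h : f.obj a = f.obj a'), f.map u = eqToHom h →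
          ∃ e : t.obj a = t.obj a', t.map u = eqToHom e) →
        ∃! t' : Q ⥤ X, q ⋙ t' = t) :=
  ⟨Cat.of (FiberComponent f hf), FiberComponent.quotient f hf, FiberComponent.proj f hf,
    FiberComponent.quotient_comp_proj, FiberComponent.isDiscreteFibration_proj,
    FiberComponent.killsVertical_quotient, fun t ht =>
      ⟨FiberComponent.lift hf t ht, FiberComponent.quotient_comp_lift t ht,
        fun _ => FiberComponent.eq_lift t ht⟩⟩
end

section
/- The reflection π : Cat ⥤ Gpd of categories into groupoids can be computed by a coinverter: for a category A, the unit component η_A : A ⥤ π(A) is the universal functor inverting the canonical natural transformation μ_A : d₀ ⟶ d₁ between the domain and codomain projections of the arrow category A ↓ A. That is, η_A composed with μ_A is a natural isomorphism, and any functor g : A ⥤ X such that whiskering μ_A with g yields a natural isomorphism factors uniquely through η_A. -/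
open CategoryTheory

universe v₁ v₂ u₁ u₂

/-- The canonical natural transformation `μ_A : d₀ ⟶ d₁` between the domain and codomain
projections of the arrow category `A ↓ A`, whose component at an arrow `α` is `α` itself. -/
def muA (A : Type u₁) [Category.{v₁} A] :
    (Arrow.leftFunc : Arrow A ⥤ A) ⟶ Arrow.rightFunc where
  app α := α.hom
  naturality _ _ f := Arrow.w f

lemma isIso_whiskerRight_muA_iff {A : Type u₁} [Category.{v₁} A] {X : Type u₂}
    [Category.{v₂} X] (g : A ⥤ X) :
    IsIso (Functor.whiskerRight (muA A) g) ↔ (⊤ : MorphismProperty A).IsInvertedBy g := by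
  rw [NatTrans.isIso_iff_isIso_app]
  exact ⟨fun h _ _ f _ ↦ h (Arrow.mk f), fun h α ↦ h α.hom trivial⟩

/-- The reflection of categories into groupoids is computed by a coinverter: there is a
groupoid `G` and a functor `η_A : A ⥤ G` such that `η_A` inverts `μ_A` and any functor
`g : A ⥤ X` inverting `μ_A` factors uniquely through `η_A`. -/
theorem stmt15 (A : Type u₁) [Category.{v₁} A] :
    ∃ (G : Grpd.{max u₁ v₁, u₁}) (η : A ⥤ G),
      IsIso (Functor.whiskerRight (muA A) η) ∧
      ∀ {X : Type u₂} [Category.{v₂} X] (g : A ⥤ X),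
        IsIso (Functor.whiskerRight (muA A) g) → ∃! g' : G ⥤ X, η ⋙ g' = g := by
  refine ⟨@Grpd.of _ Localization.groupoid, (⊤ : MorphismProperty A).Q,
    (isIso_whiskerRight_muA_iff _).2 (⊤ : MorphismProperty A).Q_inverts, fun g hg ↦ ?_⟩
  have hinv := (isIso_whiskerRight_muA_iff g).1 hg
  refine ⟨Localization.Construction.lift g hinv, Localization.Construction.fac g hinv,
    fun g' hg' ↦ Localization.Construction.uniq _ _
      (hg'.trans (Localization.Construction.fac g hinv).symm)⟩
end

section
/- Let f : A ⥤ B be a functor and let μ_A : d₀ ⟶ d₁ be the canonical natural transformation on the arrow category A ↓ A. The identee of f—that is, the universal pair (K, κ) of a category K with a natural transformation κ between two functors K ⥤ A such that f κ is an identity—is given by the full subcategory K of A ↓ A on arrows α with f α an identity, together with the restriction of μ_A to K. -/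
open CategoryTheory

universe v₁ v₂ v₃ u₁ u₂ u₃

variable {A : Type u₁} {B : Type u₂} [Category.{v₁} A] [Category.{v₂} B]

/-- The full subcategory of the arrow category of `A` on the `f`-vertical arrows. -/
def Identee (f : A ⥤ B) : Type max u₁ v₁ :=
  ObjectProperty.FullSubcategory (fun α : Arrow A =>
    ∃ h : f.obj α.left = f.obj α.right, f.map α.hom = eqToHom h)

instance (f : A ⥤ B) : Category (Identee f) :=
  ObjectProperty.FullSubcategory.category _

/-- Domain projection `k₀ : K ⥤ A`. -/
def identeeK₀ (f : A ⥤ B) : Identee f ⥤ A :=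
  ObjectProperty.ι _ ⋙ Arrow.leftFunc

/-- Codomain projection `k₁ : K ⥤ A`. -/
def identeeK₁ (f : A ⥤ B) : Identee f ⥤ A :=
  ObjectProperty.ι _ ⋙ Arrow.rightFunc

/-- The restriction of `μ_A` to the `f`-vertical arrows. -/
def identeeKappa (f : A ⥤ B) : identeeK₀ f ⟶ identeeK₁ f where
  app α := α.obj.hom
  naturality _ _ u := u.hom.w
/-! A functor `X ⥤ Arrow A` is the same thing as a natural transformation between two functors
`X ⥤ A`, and the two passages are mutually inverse on the nose (structure eta). A natural
transformation is an `eqToHom` exactly when each of its components is, so `f σ` is an identity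
precisely when `σ` lands in the `f`-vertical arrows; the lift of `σ` into `Identee f` is then
the unique functor recovering `σ` from `κ`. -/

namespace CategoryTheory

theorem NatTrans.exists_eq_eqToHom_iff {C D : Type*} [Category C] [Category D] {F G : C ⥤ D}
    (τ : F ⟶ G) :
    (∃ w : F = G, τ = eqToHom w) ↔ ∀ x, ∃ e : F.obj x = G.obj x, τ.app x = eqToHom e := by
  constructor
  · rintro ⟨w, rfl⟩ x
    exact ⟨Functor.congr_obj w x, eqToHom_app w x⟩
  · intro h
    choose e he using h
    have (x : C) : IsIso (τ.app x) := by rw [he x]; infer_instance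
    have : IsIso τ := NatIso.isIso_of_isIso_app τ
    have w : F = G := Functor.ext_of_iso (asIso τ) e he
    exact ⟨w, NatTrans.ext (funext fun x => (he x).trans (eqToHom_app w x).symm)⟩

def NatTrans.toArrowFunctor {C D : Type*} [Category C] [Category D] {F G : C ⥤ D} (τ : F ⟶ G) :
    C ⥤ Arrow D where
  obj x := Arrow.mk (τ.app x)
  map u := Arrow.homMk (F.map u) (G.map u) (τ.naturality u)

end CategoryTheory

namespace Identee

variable (f : A ⥤ B) {X : Type u₃} [Category.{v₃} X]

def lift {g h : X ⥤ A} (σ : g ⟶ h)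
    (hσ : ∀ x, ∃ e : f.obj (g.obj x) = f.obj (h.obj x), f.map (σ.app x) = eqToHom e) :
    X ⥤ Identee f :=
  ObjectProperty.lift _ σ.toArrowFunctor hσ

theorem lift_whiskerLeft_identeeKappa (t : X ⥤ Identee f) :
    lift f (Functor.whiskerLeft t (identeeKappa f)) (fun x => (t.obj x).property) = t :=
  rfl

end Identee


/-- The identee of `f : A ⥤ B` is the full subcategory `K` of the arrow category of `A` on the
arrows sent by `f` to identities, with the restriction `κ` of `μ_A`: the whiskering of `κ` with
`f` is an identity, and every natural transformation `σ` between functors `X ⥤ A` whose image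
under `f` is an identity arises from `κ` by whiskering with a unique functor `X ⥤ K`. -/
theorem stmt16 (f : A ⥤ B) :
    (∃ w : identeeK₀ f ⋙ f = identeeK₁ f ⋙ f,
      Functor.whiskerRight (identeeKappa f) f = eqToHom w) ∧
    ∀ {X : Type u₃} [Category.{v₃} X] (g h : X ⥤ A) (σ : g ⟶ h),
      (∃ wσ : g ⋙ f = h ⋙ f, Functor.whiskerRight σ f = eqToHom wσ) →
      ∃! t : X ⥤ Identee f,
        ∃ (e₁ : g = t ⋙ identeeK₀ f) (e₂ : t ⋙ identeeK₁ f = h),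
          σ = eqToHom e₁ ≫ Functor.whiskerLeft t (identeeKappa f) ≫ eqToHom e₂ := by
  refine ⟨(NatTrans.exists_eq_eqToHom_iff _).2 fun α => α.property, ?_⟩
  intro X _ g h σ hσ
  refine ⟨Identee.lift f σ ((NatTrans.exists_eq_eqToHom_iff _).1 hσ), ⟨rfl, rfl, ?_⟩, ?_⟩
  · -- `lift ⋙ k₀`, `lift ⋙ k₁` and `lift κ` are `g`, `h` and `σ` by definition
    exact (by simp : σ = 𝟙 g ≫ σ ≫ 𝟙 h)
  · rintro t ⟨rfl, rfl, rfl⟩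
    simp only [eqToHom_refl, Category.id_comp, Category.comp_id]
    exact (Identee.lift_whiskerLeft_identeeKappa f t).symm
end
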